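/- If a simple unital C*-algebra A contains an isometry v (v*v = 1) with vv* ≠ 1, then its topological stable rank is infinite. -/

import Mathlib

/-- The set `Lg_n(A)` of left-generating `n`-tuples: tuples `(b 0, …, b (n-1))` such that
`∑ᵢ bᵢ* bᵢ` is invertible. -/
def Lg (A : Type*) [NormedRing A] [StarRing A] (n : ℕ) : Set (Fin n → A) :=
  {b | IsUnit (∑ i, star (b i) * b i)}

/-- The topological stable rank of a unital (C*-)algebra: the least `n ≥ 1` such that
`Lg_n(A)` is dense in `Aⁿ`, or `∞` if there is no such `n`. -/
noncomputable def tsr (A : Type*) [NormedRing A] [StarRing A] : ℕ∞ :=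
  sInf {N : ℕ∞ | ∃ n : ℕ, 1 ≤ n ∧ N = n ∧ Dense (Lg A n)}

/-- A C*-algebra is simple if it is nonzero and has no nontrivial closed two-sided ideals. -/
def CStarSimple (A : Type*) [CStarAlgebra A] : Prop :=
  (0 : A) ≠ 1 ∧ ∀ I : TwoSidedIdeal A, IsClosed (I : Set A) → I = ⊥ ∨ I = ⊤

/-- A unital C*-algebra is finite if every isometry is a unitary (equivalently, `1` is not
Murray–von Neumann equivalent to a proper subprojection). -/
def CStarFinite (A : Type*) [CStarAlgebra A] : Prop :=
  ∀ v : A, star v * v = 1 → v * star v = 1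

/-- A tracial state on a unital C*-algebra: a unital positive linear functional `τ`
with `τ(ab) = τ(ba)`. -/
def IsTracialState (A : Type*) [CStarAlgebra A] (τ : WeakDual ℂ A) : Prop :=
  τ 1 = 1 ∧ (∀ a : A, ∃ r : ℝ, 0 ≤ r ∧ τ (star a * a) = (r : ℂ)) ∧
    ∀ a b : A, τ (a * b) = τ (b * a)

/-- The trace space `T(A)`, as a subset of the weak-* dual. -/
def TraceSpace (A : Type*) [CStarAlgebra A] : Set (WeakDual ℂ A) :=
  {τ | IsTracialState A τ}

/-- A conditional expectation from `B` onto `A`, relative to a unital embedding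
`ι : A → B`: a unital positive `A`-bimodule projection of `B` onto `A`. -/
structure CondExpectation {A B : Type*} [CStarAlgebra A] [CStarAlgebra B]
    (ι : A →⋆ₐ[ℂ] B) where
  toFun : B →L[ℂ] A
  fix : ∀ a : A, toFun (ι a) = a
  left_mod : ∀ (a : A) (b : B), toFun (ι a * b) = a * toFun b
  right_mod : ∀ (a : A) (b : B), toFun (b * ι a) = toFun b * a
  star_map : ∀ b : B, toFun (star b) = star (toFun b)
  pos : ∀ b : B, ∃ c : A, toFun (star b * b) = star c * c

/-- A quasi-basis for a conditional expectation `E`: a finite family `(v k)` in `B` with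
`b = ∑ₖ vₖ E(vₖ* b) = ∑ₖ E(b vₖ) vₖ*` for all `b`. -/
def IsQuasiBasis {A B : Type*} [CStarAlgebra A] [CStarAlgebra B] {ι : A →⋆ₐ[ℂ] B}
    (E : CondExpectation ι) {n : ℕ} (v : Fin n → B) : Prop :=
  ∀ b : B, (b = ∑ k, v k * ι (E.toFun (star (v k) * b))) ∧
    (b = ∑ k, ι (E.toFun (b * v k)) * star (v k))

/-- An inclusion `A ⊆ B` (given by the unital embedding `ι`) is of index-finite type if
there is a conditional expectation `E : B → A` admitting a finite quasi-basis. -/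
def IndexFiniteType {A B : Type*} [CStarAlgebra A] [CStarAlgebra B]
    (ι : A →⋆ₐ[ℂ] B) : Prop :=
  ∃ (E : CondExpectation ι) (n : ℕ) (v : Fin n → B), IsQuasiBasis E v

/-- A realization of the (spatial/maximal, these agree in the nuclear case) C*-tensor
product of `B` and `Z`: a C*-algebra `T` together with commuting unital embeddings of `B`
and `Z` whose images generate `T` as a C*-algebra. -/
structure CStarTensor (B Z T : Type*) [CStarAlgebra B] [CStarAlgebra Z]
    [CStarAlgebra T] where
  ι₁ : B →⋆ₐ[ℂ] T
  ι₂ : Z →⋆ₐ[ℂ] T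
  inj₁ : Function.Injective ι₁
  inj₂ : Function.Injective ι₂
  comm : ∀ (b : B) (z : Z), ι₁ b * ι₂ z = ι₂ z * ι₁ b
  generates :
    (StarAlgebra.adjoin ℂ (Set.range (⇑ι₁) ∪ Set.range (⇑ι₂))).topologicalClosure = ⊤

/-- `B` absorbs `Z` tensorially: `B ⊗ Z ≅ B`. -/
def AbsorbsTensor (B Z : Type*) [CStarAlgebra B] [CStarAlgebra Z] : Prop :=
  ∃ (T : Type) (_ : CStarAlgebra T) (_ : CStarTensor B Z T), Nonempty (T ≃⋆ₐ[ℂ] B)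

/-- The n×n matrix algebra `Mₙ(ℂ)`, realized as operators on `ℂⁿ`. -/
abbrev MatrixAlg (n : ℕ) : Type :=
  EuclideanSpace ℂ (Fin n) →L[ℂ] EuclideanSpace ℂ (Fin n)

/-- A linear map between C*-algebras is completely positive if all of its matrix
amplifications preserve positivity. -/
def IsCompletelyPositive {A B : Type*} [CStarAlgebra A] [CStarAlgebra B]
    (φ : A →L[ℂ] B) : Prop :=
  ∀ (n : ℕ) (x : Matrix (Fin n) (Fin n) A), (∃ y : Matrix (Fin n) (Fin n) A, x = star y * y) →
    ∃ z : Matrix (Fin n) (Fin n) B, x.map (⇑φ) = star z * z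

/-- A C*-algebra is nuclear if the identity map can be approximated pointwise in norm by
unital completely positive maps factoring through matrix algebras. -/
def IsNuclear (A : Type*) [CStarAlgebra A] : Prop :=
  ∀ (s : Finset A) (ε : ℝ), 0 < ε →
    ∃ (n : ℕ) (φ : A →L[ℂ] MatrixAlg n) (ψ : MatrixAlg n →L[ℂ] A),
      IsCompletelyPositive φ ∧ IsCompletelyPositive ψ ∧ φ 1 = 1 ∧ ‖ψ‖ ≤ 1 ∧
      ∀ a ∈ s, ‖ψ (φ a) - a‖ < ε

/-- The Jiang–Su algebra: the (unique) unital separable simple infinite-dimensional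
nuclear C*-algebra with a unique tracial state whose K-theory agrees with that of `ℂ`;
here characterized by the listed properties together with being strongly self-absorbing. -/
structure IsJiangSuAlgebra (Z : Type*) [CStarAlgebra Z] : Prop where
  separable : TopologicalSpace.SeparableSpace Z
  simple : CStarSimple Z
  nuclear : IsNuclear Z
  infiniteDimensional : ¬ FiniteDimensional ℂ Z
  uniqueTracialState : ∃! τ : WeakDual ℂ Z, IsTracialState Z τ
  selfAbsorbing : AbsorbsTensor Z Z

/-- An action of a group `G` on a C*-algebra `A` by *-automorphisms. -/
structure CStarAction (G : Type*) [Group G] (A : Type*) [CStarAlgebra A] where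
  hom : G → (A ≃⋆ₐ[ℂ] A)
  hom_one : ∀ a : A, hom 1 a = a
  hom_mul : ∀ (g h : G) (a : A), hom (g * h) a = hom g (hom h a)

/-- A realization of the C*-crossed product `A ⋊_α G` (for `G` finite, the universal and
reduced crossed products agree): a C*-algebra `B` generated by a copy of `A` and unitaries
`u g` implementing `α`, together with the canonical faithful conditional expectation onto
`A` determined by `E(a u_g) = δ_{g,e} a`. -/
structure CrossedProduct (G : Type*) [Group G] (A : Type*) [CStarAlgebra A]
    (α : CStarAction G A) (B : Type*) [CStarAlgebra B] where
  ι : A →⋆ₐ[ℂ] B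
  inj : Function.Injective ι
  u : G → B
  u_unitary : ∀ g, star (u g) * u g = 1 ∧ u g * star (u g) = 1
  u_mul : ∀ g h, u g * u h = u (g * h)
  u_one : u 1 = 1
  covariant : ∀ (g : G) (a : A), u g * ι a * star (u g) = ι (α.hom g a)
  generates :
    (StarAlgebra.adjoin ℂ (Set.range (⇑ι) ∪ Set.range u)).topologicalClosure = ⊤
  E : B →L[ℂ] B
  E_apply_one : ∀ a : A, E (ι a * u 1) = ι a
  E_apply_ne : ∀ (a : A) (g : G), g ≠ 1 → E (ι a * u g) = 0
  E_mem : ∀ b, E b ∈ Set.range (⇑ι)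
  E_pos : ∀ b : B, ∃ a : A, E (star b * b) = ι (star a * a)
  E_faithful : ∀ b : B, E (star b * b) = 0 → b = 0

/-- Covering dimension at most `n`: every open cover has an open refinement in which each
point lies in at most `n + 1` sets. -/
def CoveringDimLe (X : Type*) [TopologicalSpace X] (n : ℕ) : Prop :=
  ∀ (I : Type) (U : I → Set X), (∀ i, IsOpen (U i)) → (⋃ i, U i) = Set.univ →
    ∃ (J : Type) (V : J → Set X), (∀ j, IsOpen (V j)) ∧ (⋃ j, V j) = Set.univ ∧
      (∀ j, ∃ i, V j ⊆ U i) ∧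
      ∀ x : X, {j | x ∈ V j}.Finite ∧ {j | x ∈ V j}.ncard ≤ n + 1


/-!
Simplicity makes the nonzero projection `p = 1 - v v*` generate `A` as a closed ideal, hence
algebraically (units are open): `1 = ∑ aᵢ p bᵢ`. The partial isometries `vⁱ p` have orthogonal
ranges, so `x = ∑_{i<m} vⁱ p bᵢ` is left invertible and orthogonal to `vᵐ`; normalizing `x`
gives isometries `u = vᵐ` and `w` with `u* w = 0`, and then `sₖ = uᵏ w` is an infinite
orthonormal sequence of isometries.

If `Lg_n(A)` were dense, some `b ∈ Lg_n(A)` would be close to `(s₀*, …, sₙ₋₁*)`, and then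
`c = ∑ sₖ bₖ` satisfies `c* c = ∑ bₖ* bₖ` (invertible), `P c = c` and `‖c - P‖ < 1` for the
projection `P = ∑ sₖ sₖ*`. With `Z = 1 + (c - P) P` (invertible, commuting with `P`) one gets
`c Z⁻¹ P = P`, so `ξ = sₙ - Z⁻¹ P c sₙ` solves `c ξ = 0` while `sₙ* ξ = 1`: `c` is not left
invertible.
-/

namespace TwoSidedIdeal

section Closure
variable {R : Type*} [Ring R] [TopologicalSpace R] [IsTopologicalRing R]

protected def closure (I : TwoSidedIdeal R) : TwoSidedIdeal R :=
  .mk' (closure I) (subset_closure I.zero_mem)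
    (fun hx hy ↦ map_mem_closure₂ continuous_add hx hy fun _ ha _ hb ↦ I.add_mem ha hb)
    (fun hx ↦ map_mem_closure continuous_neg hx fun _ ha ↦ I.neg_mem ha)
    (fun {x _} hy ↦ map_mem_closure (continuous_const_mul x) hy fun _ ha ↦ I.mul_mem_left x _ ha)
    (fun {_ y} hx ↦ map_mem_closure (f := (· * y)) (continuous_mul_const y) hx
      fun _ ha ↦ I.mul_mem_right _ y ha)

@[simp]
lemma coe_closure (I : TwoSidedIdeal R) : (I.closure : Set R) = closure I := by
  simp [TwoSidedIdeal.closure]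

lemma le_closure (I : TwoSidedIdeal R) : I ≤ I.closure := fun _ hx ↦ by
  simpa only [← SetLike.mem_coe, coe_closure] using subset_closure hx

lemma isClosed_closure (I : TwoSidedIdeal R) : IsClosed (I.closure : Set R) := by
  simpa only [coe_closure] using _root_.isClosed_closure

end Closure

lemma closure_ne_top {R : Type*} [NormedRing R] [HasSummableGeomSeries R] {I : TwoSidedIdeal R}
    (hI : I ≠ ⊤) : I.closure ≠ ⊤ := by
  rw [Ne, ← one_mem_iff, ← SetLike.mem_coe, coe_closure]
  intro h1
  obtain ⟨z, hz, hzI⟩ := mem_closure_iff.mp h1 _ Units.isOpen isUnit_one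
  obtain ⟨u, rfl⟩ := hz
  exact hI <| (one_mem_iff I).mp <| by simpa using I.mul_mem_left (↑u⁻¹) _ hzI

lemma exists_eq_sum_mul_mul_of_mem_span_singleton {R : Type*} [Ring R] {p z : R}
    (hz : z ∈ span {p}) : ∃ (m : ℕ) (a b : Fin m → R), z = ∑ i, a i * p * b i := by
  rw [mem_span_iff_mem_addSubgroup_closure] at hz
  induction hz using AddSubgroup.closure_induction with
  | mem z hz =>
    obtain ⟨-, ⟨a, -, _, rfl, rfl⟩, b, -, rfl⟩ := hz
    exact ⟨1, fun _ ↦ a, fun _ ↦ b, by simp⟩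
  | zero => exact ⟨0, Fin.elim0, Fin.elim0, by simp⟩
  | add _ _ _ _ hx hy =>
    obtain ⟨m, a, b, rfl⟩ := hx
    obtain ⟨m', a', b', rfl⟩ := hy
    exact ⟨m + m', Fin.append a a', Fin.append b b', by simp [Fin.sum_univ_add]⟩
  | neg _ _ hx =>
    obtain ⟨m, a, b, rfl⟩ := hx
    exact ⟨m, -a, b, by simp [← Finset.sum_neg_distrib]⟩

end TwoSidedIdeal

lemma CStarSimple.exists_one_eq_sum_mul_mul {A : Type*} [CStarAlgebra A] (hA : CStarSimple A)
    {p : A} (hp : p ≠ 0) : ∃ (m : ℕ) (a b : Fin m → A), 1 = ∑ i, a i * p * b i := by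
  have hI : TwoSidedIdeal.span {p} = ⊤ := by
    by_contra hI
    have hp' : p ∈ (TwoSidedIdeal.span {p}).closure :=
      TwoSidedIdeal.le_closure _ (TwoSidedIdeal.subset_span rfl)
    rcases hA.2 _ (TwoSidedIdeal.isClosed_closure _) with hbot | htop
    · exact hp (by rwa [hbot, TwoSidedIdeal.mem_bot] at hp')
    · exact TwoSidedIdeal.closure_ne_top hI htop
  have h1 : (1 : A) ∈ TwoSidedIdeal.span {p} := (TwoSidedIdeal.one_mem_iff _).mpr hI
  exact TwoSidedIdeal.exists_eq_sum_mul_mul_of_mem_span_singleton h1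

section StarRing
variable {R : Type*} [Ring R] [StarRing R] {v : R}

lemma star_pow_mul_pow_eq_one (hv : star v * v = 1) (k : ℕ) : star (v ^ k) * v ^ k = 1 := by
  induction k with
  | zero => simp
  | succ k ih => rw [pow_succ, star_mul, mul_assoc, ← mul_assoc (star (v ^ k)), ih, one_mul, hv]

lemma isStarProjection_one_sub_mul_star (hv : star v * v = 1) :
    IsStarProjection (1 - v * star v) := by
  refine IsStarProjection.one_sub ⟨?_, ?_⟩
  · rw [IsIdempotentElem, mul_assoc, ← mul_assoc (star v), hv, one_mul]
  · simp [IsSelfAdjoint]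

lemma one_sub_mul_star_mul_self (hv : star v * v = 1) : (1 - v * star v) * v = 0 := by
  rw [sub_mul, one_mul, mul_assoc, hv, mul_one, sub_self]

lemma star_pow_mul_pow_mul_eq_zero (hv : star v * v = 1) {x : R} (hx : star x * v = 0)
    {i j : ℕ} (hij : j < i) : star (v ^ i) * (v ^ j * x) = 0 := by
  obtain ⟨k, rfl⟩ := Nat.exists_eq_add_of_lt hij
  calc star (v ^ (j + k + 1)) * (v ^ j * x)
      = star (v ^ (k + 1)) * (star (v ^ j) * v ^ j) * x := by
        rw [add_assoc, pow_add, star_mul]; noncomm_ring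
    _ = star (star x * v ^ (k + 1)) := by
        rw [star_pow_mul_pow_eq_one hv, mul_one, star_mul, star_star]
    _ = 0 := by rw [pow_succ', ← mul_assoc, hx, zero_mul, star_zero]

lemma star_pow_mul_mul_pow_mul (hv : star v * v = 1) {x : R} (hx : star x * v = 0) (i j : ℕ) :
    star (v ^ i * x) * (v ^ j * x) = if i = j then star x * x else 0 := by
  rcases lt_trichotomy i j with hij | rfl | hij
  · rw [if_neg hij.ne, ← star_star (v ^ j * x), ← star_mul, star_mul (v ^ j), mul_assoc,
      star_pow_mul_pow_mul_eq_zero hv hx hij, mul_zero, star_zero]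
  · rw [if_pos rfl, star_mul, mul_assoc, ← mul_assoc (star (v ^ i)),
      star_pow_mul_pow_eq_one hv, one_mul]
  · rw [if_neg hij.ne', star_mul, mul_assoc, star_pow_mul_pow_mul_eq_zero hv hx hij, mul_zero]

lemma exists_mul_eq_one_and_star_pow_mul_eq_zero (hv : star v * v = 1) {p : R}
    (hp : IsStarProjection p) (hpv : p * v = 0) {m : ℕ} {a b : Fin m → R}
    (h : 1 = ∑ i, a i * p * b i) : ∃ r x : R, r * x = 1 ∧ star (v ^ m) * x = 0 := by
  have hpv' : star p * v = 0 := by rwa [hp.isSelfAdjoint.star_eq]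
  refine ⟨∑ i, a i * star (v ^ (i : ℕ) * p), ∑ j : Fin m, v ^ (j : ℕ) * p * b j, ?_, ?_⟩
  · rw [h, Finset.sum_mul_sum]
    refine Finset.sum_congr rfl fun i _ ↦ ?_
    have hterm : ∀ j : Fin m, a i * star (v ^ (i : ℕ) * p) * (v ^ (j : ℕ) * p * b j) =
        if i = j then a i * p * b i else 0 := by
      intro j
      rw [← mul_assoc, mul_assoc (a i), star_pow_mul_mul_pow_mul hv hpv']
      simp_rw [Fin.val_inj]
      split_ifs with hij
      · rw [hij, hp.isSelfAdjoint.star_eq, hp.isIdempotentElem.eq]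
      · simp
    simp only [hterm, Finset.sum_ite_eq, Finset.mem_univ, if_true]
  · rw [Finset.mul_sum]
    refine Finset.sum_eq_zero fun j _ ↦ ?_
    rw [mul_assoc (v ^ _), star_pow_mul_pow_mul_eq_zero hv ?_ j.isLt]
    rw [star_mul, mul_assoc, hpv', mul_zero]

variable {n : ℕ} {s : Fin n → R}

lemma star_sum_mul_mul_sum_mul (hs : ∀ k l, star (s k) * s l = if k = l then 1 else 0)
    (b c : Fin n → R) : star (∑ k, s k * b k) * ∑ k, s k * c k = ∑ k, star (b k) * c k := by
  rw [star_sum, Finset.sum_mul_sum]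
  refine Finset.sum_congr rfl fun k _ ↦ ?_
  have hterm : ∀ l, star (s k * b k) * (s l * c l) = if k = l then star (b k) * c k else 0 := by
    intro l
    rw [star_mul, mul_assoc, ← mul_assoc (star (s k)), hs]
    split_ifs with h <;> simp [h]
  simp only [hterm, Finset.sum_ite_eq, Finset.mem_univ, if_true]

lemma sum_mul_star_mul (hs : ∀ k l, star (s k) * s l = if k = l then 1 else 0) (j : Fin n) :
    (∑ k, s k * star (s k)) * s j = s j := by
  simp only [Finset.sum_mul, mul_assoc, hs, mul_ite, mul_one, mul_zero, Finset.sum_ite_eq',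
    Finset.mem_univ, if_true]

lemma isStarProjection_sum_mul_star (hs : ∀ k l, star (s k) * s l = if k = l then 1 else 0) :
    IsStarProjection (∑ k, s k * star (s k)) where
  isIdempotentElem := by
    rw [IsIdempotentElem, Finset.mul_sum]
    simp only [← mul_assoc, sum_mul_star_mul hs]
  isSelfAdjoint := by simp [IsSelfAdjoint, star_sum]

end StarRing

section CStarAlgebra
variable {A : Type*} [CStarAlgebra A]

lemma isUnit_star_mul_self_of_mul_eq_one {r x : A} (h : r * x = 1) : IsUnit (star x * x) := by
  let : PartialOrder A := CStarAlgebra.spectralOrder A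
  have : StarOrderedRing A := CStarAlgebra.spectralOrderedRing A
  nontriviality A
  have hr : ‖r‖ ^ 2 ≠ 0 := pow_ne_zero 2 <| norm_ne_zero_iff.mpr fun hr ↦ by simp [hr] at h
  have hle : (1 : A) ≤ ‖r‖ ^ 2 • (star x * x) := by
    calc (1 : A) = star (r * x) * (r * x) := by rw [h, star_one, one_mul]
      _ = star x * (star r * r) * x := by rw [star_mul]; noncomm_ring
      _ ≤ star x * algebraMap ℝ A (‖r‖ ^ 2) * x :=
          star_left_conjugate_le_conjugate CStarAlgebra.star_mul_le_algebraMap_norm_sq x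
      _ = ‖r‖ ^ 2 • (star x * x) := by
          rw [Algebra.algebraMap_eq_smul_one, mul_smul_comm, mul_one, smul_mul_assoc]
  have := CStarAlgebra.isUnit_of_le 1 hle isStrictlyPositive_one
  rwa [← Units.smul_mk0 hr, isUnit_smul_iff] at this

lemma exists_star_mul_self_mul_eq_one {x : A} (hx : IsUnit (star x * x)) :
    ∃ a : A, star (x * a) * (x * a) = 1 := by
  let : PartialOrder A := CStarAlgebra.spectralOrder A
  have : StarOrderedRing A := CStarAlgebra.spectralOrderedRing A
  have hpos : IsStrictlyPositive (star x * x) := hx.isStrictlyPositive (star_mul_self_nonneg x)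
  refine ⟨(star x * x) ^ (-(1 / 2) : ℝ), ?_⟩
  rw [star_mul, (CFC.rpow_nonneg (a := star x * x)).isSelfAdjoint.star_eq, mul_assoc,
    ← mul_assoc (star x), ← mul_assoc, CFC.conjugate_rpow_neg_one_half _ hpos]

lemma CStarSimple.exists_isometries_star_mul_eq_zero (hA : CStarSimple A) {v : A}
    (hv : star v * v = 1) (hv' : v * star v ≠ 1) :
    ∃ u w : A, star u * u = 1 ∧ star w * w = 1 ∧ star u * w = 0 := by
  obtain ⟨m, a, b, h⟩ := hA.exists_one_eq_sum_mul_mul (sub_ne_zero.mpr hv'.symm)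
  obtain ⟨r, x, hrx, hx⟩ := exists_mul_eq_one_and_star_pow_mul_eq_zero hv
    (isStarProjection_one_sub_mul_star hv) (one_sub_mul_star_mul_self hv) h
  obtain ⟨c, hc⟩ := exists_star_mul_self_mul_eq_one (isUnit_star_mul_self_of_mul_eq_one hrx)
  exact ⟨v ^ m, x * c, star_pow_mul_pow_eq_one hv m, hc, by rw [← mul_assoc, hx, zero_mul]⟩

variable [Nontrivial A]

lemma norm_eq_one_of_star_mul_self_eq_one {w : A} (hw : star w * w = 1) : ‖w‖ = 1 := by
  have h := CStarRing.norm_star_mul_self (x := w)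
  rw [hw, norm_one] at h
  nlinarith [norm_nonneg w]

lemma not_isUnit_star_mul_self_of_norm_sub_lt_one {P W x : A} (hP : IsStarProjection P)
    (hW : star W * W = 1) (hPW : P * W = 0) (hx : P * x = x) (hxP : ‖x - P‖ < 1) :
    ¬ IsUnit (star x * x) := by
  intro hunit
  have hPP := hP.isIdempotentElem.eq
  obtain ⟨Z, hZ⟩ : IsUnit (1 + (x - P) * P) := by
    have : ‖-((x - P) * P)‖ < 1 := by
      rw [norm_neg]
      calc ‖(x - P) * P‖ ≤ ‖x - P‖ * ‖P‖ := norm_mul_le _ _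
        _ ≤ ‖x - P‖ := mul_le_of_le_one_right (norm_nonneg _) (hP.norm_le P)
        _ < 1 := hxP
    simpa using (Units.oneSub _ this).isUnit
  have hZP : (Z : A) * P = x * P := by
    rw [hZ, add_mul, one_mul, mul_assoc, hPP, sub_mul, hPP, add_sub_cancel]
  have hPZ : P * Z = x * P := by
    rw [hZ, mul_add, mul_one, ← mul_assoc, mul_sub, hx, hPP, sub_mul, hPP, add_sub_cancel]
  have hPZ' : Commute P ↑Z⁻¹ := Commute.units_inv_right (hPZ.trans hZP.symm)
  have hxZP : x * (↑Z⁻¹ * P) = P := calc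
    x * (↑Z⁻¹ * P) = x * P * ↑Z⁻¹ := by rw [← hPZ'.eq, mul_assoc]
    _ = P := by rw [← hPZ, mul_assoc, Units.mul_inv, mul_one]
  set ξ := W - ↑Z⁻¹ * P * x * W
  have hxξ : x * ξ = 0 := by
    rw [mul_sub, show x * (↑Z⁻¹ * P * x * W) = x * (↑Z⁻¹ * P) * (x * W) by noncomm_ring, hxZP,
      ← mul_assoc, hx, sub_self]
  have hWξ : star W * ξ = 1 := by
    have hWP : star W * P = 0 := by
      rw [← hP.isSelfAdjoint.star_eq, ← star_mul, hPW, star_zero]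
    rw [mul_sub, hW, show star W * (↑Z⁻¹ * P * x * W) = star W * P * (↑Z⁻¹ * x * W) by
      rw [← hPZ'.eq]; noncomm_ring, hWP, zero_mul, sub_zero]
  have hξ : ξ = 0 := (hunit.mul_right_eq_zero).mp (by rw [mul_assoc, hxξ, mul_zero])
  simp [hξ] at hWξ

lemma not_dense_Lg_of_orthonormal {s : ℕ → A}
    (hs : ∀ k l, star (s k) * s l = if k = l then 1 else 0) (n : ℕ) : ¬ Dense (Lg A n) := by
  intro hdense
  set t : Fin n → A := fun k ↦ s k
  have ht : ∀ k l, star (t k) * t l = if k = l then 1 else 0 := by simp [t, hs, Fin.val_inj]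
  obtain ⟨b, hb, hbLg⟩ := Metric.dense_iff.mp hdense (fun k ↦ star (t k)) (1 / (n + 1))
    (by positivity)
  set P := ∑ k, t k * star (t k)
  set c := ∑ k, t k * b k
  have hPt : ∀ j, P * t j = t j := sum_mul_star_mul ht
  have hPc : P * c = c := by simp only [c, Finset.mul_sum, ← mul_assoc, hPt]
  have hPW : P * s n = 0 := by
    simp [P, Finset.sum_mul, mul_assoc, t, hs, Nat.ne_of_lt]
  have hcP : ‖c - P‖ < 1 := calc
    ‖c - P‖ = ‖∑ k, t k * (b k - star (t k))‖ := by
      simp only [c, P, mul_sub, Finset.sum_sub_distrib]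
    _ ≤ ∑ k, ‖t k‖ * ‖b k - star (t k)‖ :=
      (norm_sum_le _ _).trans (Finset.sum_le_sum fun k _ ↦ norm_mul_le _ _)
    _ ≤ ∑ _k : Fin n, dist b (fun k ↦ star (t k)) := Finset.sum_le_sum fun k _ ↦ by
      rw [norm_eq_one_of_star_mul_self_eq_one (by simpa using ht k k), one_mul, ← dist_eq_norm]
      exact dist_le_pi_dist b (fun k ↦ star (t k)) k
    _ < 1 := by
      have := Metric.mem_ball.mp hb
      rw [lt_div_iff₀ (by positivity)] at this
      simp only [Finset.sum_const, Finset.card_univ, Fintype.card_fin, nsmul_eq_mul]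
      nlinarith [dist_nonneg (x := b) (y := fun k ↦ star (t k))]
  refine not_isUnit_star_mul_self_of_norm_sub_lt_one (isStarProjection_sum_mul_star ht)
    (by simpa using hs n n) hPW hPc hcP ?_
  rw [star_sum_mul_mul_sum_mul ht]
  exact hbLg

end CStarAlgebra

lemma tsr_eq_top_of_forall_not_dense {A : Type*} [NormedRing A] [StarRing A]
    (h : ∀ n, ¬ Dense (Lg A n)) : tsr A = ⊤ := by
  rw [tsr, sInf_eq_top]
  rintro _ ⟨n, -, -, hn⟩
  exact absurd hn (h n)

/-- a simple unital C*-algebra containing a proper isometry has infinite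
topological stable rank. -/
theorem tsr_eq_top_of_proper_isometry (A : Type*) [CStarAlgebra A]
    (hA : CStarSimple A) (v : A) (hv : star v * v = 1) (hv' : v * star v ≠ 1) :
    tsr A = ⊤ := by
  have : Nontrivial A := ⟨⟨0, 1, hA.1⟩⟩
  obtain ⟨u, w, hu, hw, huw⟩ := hA.exists_isometries_star_mul_eq_zero hv hv'
  have hwu : star w * u = 0 := by rw [← star_star u, ← star_mul, huw, star_zero]
  exact tsr_eq_top_of_forall_not_dense <| not_dense_Lg_of_orthonormal (s := fun k ↦ u ^ k * w)
    fun k l ↦ by rw [star_pow_mul_mul_pow_mul hu hwu, hw]
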